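/- Let R be right Noetherian, V a right R-module, W ⊆ V* = Hom_{-R}(V, R) a left R-submodule, and P = (V, W) the induced left R-pairing. Then the following are equivalent: (i) P satisfies the α-condition; (ii) α_M^P is injective for every finitely presented right R-module M; (iii) W is a pure left R-submodule of R^V. -/

import Mathlib

open TensorProduct

noncomputable def alphaMap {R V W : Type*} [CommRing R] [AddCommGroup V] [Module R V]
    [AddCommGroup W] [Module R W] (κ : V →ₗ[R] W →ₗ[R] R)
    (M : Type*) [AddCommGroup M] [Module R M] : M ⊗[R] W →ₗ[R] (V →ₗ[R] M) :=
  TensorProduct.lift <| LinearMap.mk₂ R (fun m w => (κ.flip w).smulRight m)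
    (fun m₁ m₂ w => by
      ext v
      simp only [LinearMap.smulRight_apply, LinearMap.add_apply, smul_add])
    (fun c m w => by
      ext v
      simp only [LinearMap.smulRight_apply, LinearMap.smul_apply]
      rw [smul_comm])
    (fun m w₁ w₂ => by
      ext v
      simp only [LinearMap.smulRight_apply, LinearMap.add_apply, map_add,
        LinearMap.flip_apply, add_smul])
    (fun c m w => by
      ext v
      simp only [LinearMap.smulRight_apply, LinearMap.smul_apply, map_smul,
        LinearMap.flip_apply, smul_smul, smul_eq_mul])

/-- The inclusion of a submodule `W ⊆ V* = Hom_R(V, R)` into `R^V`. -/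
def inclMap {R V : Type*} [CommRing R] [AddCommGroup V] [Module R V]
    (W : Submodule R (V →ₗ[R] R)) : ↥W →ₗ[R] (V → R) where
  toFun w := ⇑(w : V →ₗ[R] R)
  map_add' := by intros; rfl
  map_smul' := by intros; rfl

section Gamma

variable {R : Type*} [CommRing R] {V : Type*}

/-- The natural map `M ⊗[R] (V → R) → (V → M)`, `m ⊗ f ↦ (v ↦ f v • m)`. -/
noncomputable def gammaMap (R : Type*) [CommRing R] (V : Type*)
    (M : Type*) [AddCommGroup M] [Module R M] :
    M ⊗[R] (V → R) →ₗ[R] (V → M) :=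
  TensorProduct.lift <| LinearMap.mk₂ R (fun m f => fun v => f v • m)
    (fun m₁ m₂ f => funext fun v => smul_add _ _ _)
    (fun c m f => funext fun v => smul_comm _ _ _)
    (fun m f₁ f₂ => funext fun v => add_smul _ _ _)
    (fun c m f => funext fun v => by
      simp only [Pi.smul_apply, smul_eq_mul, mul_smul])

@[simp] lemma gammaMap_tmul {M : Type*} [AddCommGroup M] [Module R M]
    (m : M) (f : V → R) : gammaMap R V M (m ⊗ₜ[R] f) = fun v => f v • m := rfl

lemma gammaMap_natural {M N : Type*} [AddCommGroup M] [Module R M]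
    [AddCommGroup N] [Module R N] (φ : M →ₗ[R] N) (x : M ⊗[R] (V → R)) :
    gammaMap R V N (φ.rTensor (V → R) x) = fun v => φ (gammaMap R V M x v) := by
  induction x with
  | zero => simp only [map_zero]; funext v; simp
  | tmul m f => funext v; simp
  | add a b ha hb =>
      rw [map_add, map_add, ha, hb]
      funext v; simp

/-- The inverse of `gammaMap` on finite free modules. -/
noncomputable def deltaMap (R : Type*) [CommRing R] (V : Type*) (n : ℕ) :
    (V → (Fin n → R)) →ₗ[R] (Fin n → R) ⊗[R] (V → R) :=
  ∑ j : Fin n, (TensorProduct.mk R (Fin n → R) (V → R) (Pi.single j 1)) ∘ₗ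
    ((LinearMap.proj j : (Fin n → R) →ₗ[R] R).compLeft V)

lemma deltaMap_apply (n : ℕ) (z : V → (Fin n → R)) :
    deltaMap R V n z = ∑ j : Fin n, Pi.single j (1 : R) ⊗ₜ[R] (fun v => z v j) := by
  simp [deltaMap, LinearMap.sum_apply, LinearMap.compLeft]
  rfl

lemma deltaMap_gammaMap (n : ℕ) (x : (Fin n → R) ⊗[R] (V → R)) :
    deltaMap R V n (gammaMap R V (Fin n → R) x) = x := by
  induction x with
  | zero => simp
  | tmul m f =>
      rw [gammaMap_tmul, deltaMap_apply]
      show (∑ j : Fin n, Pi.single j (1 : R) ⊗ₜ[R] fun v => (f v • m) j) = m ⊗ₜ[R] f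
      have key : ∀ j : Fin n,
          ((Pi.single j (1 : R) : Fin n → R) ⊗ₜ[R] (fun v => (f v • m) j : V → R)) = (Pi.single j (m j)) ⊗ₜ[R] f := by
        intro j
        have h1 : (fun v => (f v • m) j) = m j • f := by
          funext v
          simp [mul_comm]
        rw [h1, TensorProduct.tmul_smul, TensorProduct.smul_tmul', ← Pi.single_smul,
          smul_eq_mul, mul_one]
      rw [Finset.sum_congr rfl fun j _ => key j, ← TensorProduct.sum_tmul,
        Finset.univ_sum_single]
  | add a b ha hb => rw [map_add, map_add, ha, hb]

lemma gammaMap_deltaMap (n : ℕ) (z : V → (Fin n → R)) :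
    gammaMap R V (Fin n → R) (deltaMap R V n z) = z := by
  rw [deltaMap_apply, map_sum]
  funext v
  rw [Finset.sum_apply]
  simp only [gammaMap_tmul]
  funext i
  rw [Finset.sum_apply]
  simp only [Pi.smul_apply, smul_eq_mul]
  rw [Finset.sum_eq_single i (fun j _ hj => by simp [Pi.single_apply, hj]) (by simp)]
  simp

lemma gammaMap_free_injective (n : ℕ) :
    Function.Injective (gammaMap R V (Fin n → R)) :=
  Function.LeftInverse.injective (g := deltaMap R V n) (deltaMap_gammaMap n)

lemma gammaMap_injective_of_finite {M : Type*} [AddCommGroup M] [Module R M]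
    [IsNoetherianRing R] [Module.Finite R M] :
    Function.Injective (gammaMap R V M) := by
  rw [← LinearMap.ker_eq_bot, LinearMap.ker_eq_bot']
  intro x hx
  rw [← LinearMap.mem_ker] at hx
  have hx : gammaMap R V M x = 0 := LinearMap.mem_ker.mp hx
  obtain ⟨n, π, hπ⟩ := Module.Finite.exists_fin' R M
  set K := LinearMap.ker π with hK
  haveI : Module.Finite R K := Module.Finite.iff_fg.mpr (IsNoetherian.noetherian K)
  obtain ⟨m, ρ₀, hρ₀⟩ := Module.Finite.exists_fin' R K
  set ρ : (Fin m → R) →ₗ[R] (Fin n → R) := K.subtype ∘ₗ ρ₀ with hρ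
  have hcomp : π ∘ₗ ρ = 0 :=
    LinearMap.ext fun a => LinearMap.mem_ker.mp (ρ₀ a).2
  obtain ⟨y, rfl⟩ := LinearMap.rTensor_surjective (V → R) hπ x
  have hy : ∀ v, gammaMap R V (Fin n → R) y v ∈ K := by
    intro v
    have h := congrFun (gammaMap_natural π y) v
    rw [congrFun hx v] at h
    exact h.symm
  have hz : ∀ v, ∃ a : Fin m → R, ρ a = gammaMap R V (Fin n → R) y v := by
    intro v
    obtain ⟨a, ha⟩ := hρ₀ ⟨_, hy v⟩
    exact ⟨a, by rw [hρ, LinearMap.comp_apply, ha]; rfl⟩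
  choose z hzz using hz
  set u := deltaMap R V m z with hu
  have h1 : gammaMap R V (Fin n → R) (ρ.rTensor (V → R) u) = gammaMap R V (Fin n → R) y := by
    rw [gammaMap_natural]
    funext v
    rw [hu, gammaMap_deltaMap, hzz v]
  have h2 : ρ.rTensor (V → R) u = y := gammaMap_free_injective n h1
  rw [← h2, ← LinearMap.rTensor_comp_apply, hcomp, LinearMap.rTensor_zero,
    LinearMap.zero_apply]

lemma gammaMap_injective [IsNoetherianRing R] {M : Type*} [AddCommGroup M] [Module R M] :
    Function.Injective (gammaMap R V M) := by
  rw [← LinearMap.ker_eq_bot, LinearMap.ker_eq_bot']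
  intro x hx
  obtain ⟨N, hfin, hsub⟩ := TensorProduct.exists_finite_submodule_left_of_setFinite
    ({x} : Set (M ⊗[R] (V → R))) (Set.finite_singleton x)
  obtain ⟨y, rfl⟩ := hsub rfl
  haveI := hfin
  have hy : gammaMap R V N y = 0 := by
    funext v
    have h := congrFun (gammaMap_natural N.subtype y) v
    rw [congrFun hx v] at h
    exact Subtype.ext h.symm
  have hy0 : y = 0 := by
    apply gammaMap_injective_of_finite
    rw [hy, map_zero]
  rw [hy0, map_zero]

end Gamma

section Alpha

variable {R : Type*} [CommRing R] {V : Type*} [AddCommGroup V] [Module R V]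
  (W : Submodule R (V →ₗ[R] R))

@[simp] lemma alphaMap_tmul {M : Type*} [AddCommGroup M] [Module R M]
    (m : M) (w : W) :
    alphaMap (R := R) (V := V) (W := ↥W) W.subtype.flip M (m ⊗ₜ[R] w) = ((W.subtype.flip).flip w).smulRight m := rfl

lemma alphaMap_natural {M N : Type*} [AddCommGroup M] [Module R M]
    [AddCommGroup N] [Module R N] (φ : M →ₗ[R] N) (x : M ⊗[R] W) :
    alphaMap (R := R) (V := V) (W := ↥W) W.subtype.flip N (φ.rTensor W x) = φ ∘ₗ alphaMap (R := R) (V := V) (W := ↥W) W.subtype.flip M x := by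
  induction x with
  | zero => simp
  | tmul m w =>
      ext v
      simp
  | add a b ha hb =>
      rw [map_add, map_add, ha, hb]
      ext v
      simp

lemma gammaMap_lTensor_inclMap {M : Type*} [AddCommGroup M] [Module R M]
    (x : M ⊗[R] W) :
    gammaMap R V M ((inclMap W).lTensor M x) = ⇑(alphaMap (R := R) (V := V) (W := ↥W) W.subtype.flip M x) := by
  induction x with
  | zero => simp only [map_zero]; rfl
  | tmul m w =>
      funext v
      simp [inclMap]
  | add a b ha hb =>
      rw [map_add, map_add, ha, hb, map_add]
      rfl

end Alpha

/-- let `R` be (right) Noetherian, `V` an `R`-module,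
`W ⊆ V* = Hom_R(V, R)` a submodule and `P = (V, W)` the induced pairing
(`⟨v, w⟩ = w(v)`, i.e. `κ_P = W.subtype.flip`). Then the following are equivalent:
(i) `P` satisfies the `α`-condition; (ii) `α_M^P` is injective for every finitely
presented `R`-module `M`; (iii) `W` is a pure submodule of `R^V`. -/
theorem stmt_18 {R : Type u} [CommRing R] [IsNoetherianRing R]
    (V : Type u) [AddCommGroup V] [Module R V]
    (W : Submodule R (V →ₗ[R] R)) :
    ((∀ (M : Type u) [AddCommGroup M] [Module R M],
        Function.Injective (alphaMap (R := R) (V := V) (W := ↥W) W.subtype.flip M)) ↔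
      (∀ (M : Type u) [AddCommGroup M] [Module R M] [Module.FinitePresentation R M],
        Function.Injective (alphaMap (R := R) (V := V) (W := ↥W) W.subtype.flip M))) ∧
    ((∀ (M : Type u) [AddCommGroup M] [Module R M],
        Function.Injective (alphaMap (R := R) (V := V) (W := ↥W) W.subtype.flip M)) ↔
      (∀ (M : Type u) [AddCommGroup M] [Module R M],
        Function.Injective ((inclMap W).lTensor M))) := by
  constructor
  · constructor
    · intro h M _ _ _
      exact h M
    · intro h M _ _
      rw [injective_iff_map_eq_zero]
      intro x hx
      obtain ⟨N, hfin, hsub⟩ := TensorProduct.exists_finite_submodule_left_of_setFinite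
        ({x} : Set (M ⊗[R] W)) (Set.finite_singleton x)
      obtain ⟨y, rfl⟩ := hsub rfl
      haveI := hfin
      haveI : Module.FinitePresentation R ↥N := Module.finitePresentation_of_finite R ↥N
      have hy : alphaMap (R := R) (V := V) (W := ↥W) W.subtype.flip ↥N y = 0 := by
        ext v
        have hnat := LinearMap.congr_fun (alphaMap_natural W N.subtype y) v
        rw [hx] at hnat
        simp only [LinearMap.comp_apply, LinearMap.zero_apply] at hnat
        simpa using hnat.symm
      have hy0 : y = 0 := h ↥N (by rw [hy, map_zero])
      rw [hy0, map_zero]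
  · constructor
    · intro h M _ _
      rw [injective_iff_map_eq_zero]
      intro x hx
      have h1 : ⇑(alphaMap (R := R) (V := V) (W := ↥W) W.subtype.flip M x) = 0 := by
        rw [← gammaMap_lTensor_inclMap W x, hx, map_zero]
      have h2 : alphaMap (R := R) (V := V) (W := ↥W) W.subtype.flip M x = 0 := LinearMap.ext fun v => congrFun h1 v
      exact h M (by rw [h2, map_zero])
    · intro h M _ _
      rw [injective_iff_map_eq_zero]
      intro x hx
      have h1 : gammaMap R V M ((inclMap W).lTensor M x) = 0 := by
        rw [gammaMap_lTensor_inclMap W x, hx]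
        rfl
      have h2 : (inclMap W).lTensor M x = 0 := gammaMap_injective (by rw [h1, map_zero])
      exact h M (by rw [h2, map_zero])
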